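/- arXiv:quant-ph/0203073 — 3 statements merged into one kernel-verified Lean document; each statement's English description precedes it below -/
import Mathlib

section
/- For any density matrix ρ on C^2 ⊗ C^2, the fidelity satisfies F(ρ) ≤ (1 + N(ρ))/2, where N(ρ) = max(0, −2·λ_min(ρ^Γ)) is the negativity and λ_min denotes the smallest eigenvalue of the partial transpose ρ^Γ. -/
open Matrix Complex
open scoped ComplexOrder

noncomputable section

def pauli1 : Matrix (Fin 2) (Fin 2) ℂ := !![0, 1; 1, 0]
def pauli2 : Matrix (Fin 2) (Fin 2) ℂ := !![0, -Complex.I; Complex.I, 0]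
def pauli3 : Matrix (Fin 2) (Fin 2) ℂ := !![1, 0; 0, -1]
def pauli : Fin 3 → Matrix (Fin 2) (Fin 2) ℂ := ![pauli1, pauli2, pauli3]

/-- first-qubit index of a composite index, basis order |00⟩,|01⟩,|10⟩,|11⟩ -/
def q1 (i : Fin 4) : Fin 2 := ⟨i.val / 2, by omega⟩
def q2 (i : Fin 4) : Fin 2 := ⟨i.val % 2, by omega⟩
def pairIdx (a b : Fin 2) : Fin 4 := ⟨2 * a.val + b.val, by omega⟩

/-- Kronecker product of two 2×2 matrices as a 4×4 matrix. -/
def kron (A B : Matrix (Fin 2) (Fin 2) ℂ) : Matrix (Fin 4) (Fin 4) ℂ :=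
  fun i j => A (q1 i) (q1 j) * B (q2 i) (q2 j)

/-- Partial transpose on the second qubit. -/
def ptranspose (ρ : Matrix (Fin 4) (Fin 4) ℂ) : Matrix (Fin 4) (Fin 4) ℂ :=
  fun i j => ρ (pairIdx (q1 i) (q2 j)) (pairIdx (q1 j) (q2 i))

/-- the Bell state (|00⟩+|11⟩)/√2 -/
def bell : Fin 4 → ℂ := ![1 / Real.sqrt 2, 0, 0, 1 / Real.sqrt 2]

/-- ⟨ψ|ρ|ψ⟩ (real part) -/
def overlap (ρ : Matrix (Fin 4) (Fin 4) ℂ) (ψ : Fin 4 → ℂ) : ℝ :=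
  (star ψ ⬝ᵥ ρ *ᵥ ψ).re

/-- ψ is maximally entangled: ψ = (U_A ⊗ U_B)(|00⟩+|11⟩)/√2 with U_A, U_B ∈ SU(2). -/
def IsMaxEnt (ψ : Fin 4 → ℂ) : Prop :=
  ∃ UA UB : Matrix (Fin 2) (Fin 2) ℂ,
    UA ∈ Matrix.unitaryGroup (Fin 2) ℂ ∧ UB ∈ Matrix.unitaryGroup (Fin 2) ℂ ∧
    UA.det = 1 ∧ UB.det = 1 ∧ ψ = (kron UA UB) *ᵥ bell

/-- fidelity / maximal singlet fraction -/
def fid (ρ : Matrix (Fin 4) (Fin 4) ℂ) : ℝ :=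
  sSup {x : ℝ | ∃ ψ, IsMaxEnt ψ ∧ x = overlap ρ ψ}

/-- negativity N(ρ) = max(0, -2 λ_min(ρ^Γ)) -/
def negativity (ρ : Matrix (Fin 4) (Fin 4) ℂ) : ℝ :=
  max 0 (-2 * sInf {t : ℝ | (t : ℂ) ∈ spectrum ℂ (ptranspose ρ)})

def spinFlip : Matrix (Fin 4) (Fin 4) ℂ := kron pauli2 pauli2

def concMat (ρ : Matrix (Fin 4) (Fin 4) ℂ) : Matrix (Fin 4) (Fin 4) ℂ :=
  ρ * spinFlip * ρ.map (starRingEnd ℂ) * spinFlip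

/-- the λᵢ of Wootters' formula: square roots of the eigenvalues (with multiplicity)
of ρ (σy⊗σy) ρ̄ (σy⊗σy); these eigenvalues are real and nonnegative. -/
def concRoots (ρ : Matrix (Fin 4) (Fin 4) ℂ) : Multiset ℝ :=
  (concMat ρ).charpoly.roots.map (fun z => Real.sqrt z.re)

/-- concurrence C = max(0, λ₁-λ₂-λ₃-λ₄) = max(0, 2 max λᵢ - ∑ λᵢ) -/
def concurrence (ρ : Matrix (Fin 4) (Fin 4) ℂ) : ℝ :=
  max 0 (2 * (concRoots ρ).fold max 0 - (concRoots ρ).sum)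

/-! ### Auxiliary lemmas -/

@[simp] lemma q1_pairIdx (a b : Fin 2) : q1 (pairIdx a b) = a := by
  fin_cases a <;> fin_cases b <;> rfl
@[simp] lemma q2_pairIdx (a b : Fin 2) : q2 (pairIdx a b) = b := by
  fin_cases a <;> fin_cases b <;> rfl
@[simp] lemma pairIdx_q (i : Fin 4) : pairIdx (q1 i) (q2 i) = i := by
  fin_cases i <;> rfl
@[simp] lemma q1_0 : q1 0 = 0 := rfl
@[simp] lemma q1_1 : q1 1 = 0 := rfl
@[simp] lemma q1_2 : q1 2 = 1 := rfl
@[simp] lemma q1_3 : q1 3 = 1 := rfl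
@[simp] lemma q2_0 : q2 0 = 0 := rfl
@[simp] lemma q2_1 : q2 1 = 1 := rfl
@[simp] lemma q2_2 : q2 2 = 0 := rfl
@[simp] lemma q2_3 : q2 3 = 1 := rfl
@[simp] lemma pairIdx_00 : pairIdx 0 0 = 0 := rfl
@[simp] lemma pairIdx_01 : pairIdx 0 1 = 1 := rfl
@[simp] lemma pairIdx_10 : pairIdx 1 0 = 2 := rfl
@[simp] lemma pairIdx_11 : pairIdx 1 1 = 3 := rfl

lemma kron_mul (A B C D : Matrix (Fin 2) (Fin 2) ℂ) :
    kron A B * kron C D = kron (A * C) (B * D) := by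
  ext i j
  simp only [kron, Matrix.mul_apply, Fin.sum_univ_four, Fin.sum_univ_two,
    q1_0, q1_1, q1_2, q1_3, q2_0, q2_1, q2_2, q2_3]
  ring

lemma kron_one : kron 1 1 = (1 : Matrix (Fin 4) (Fin 4) ℂ) := by
  ext i j
  fin_cases i <;> fin_cases j <;> simp [kron, Matrix.one_apply]

lemma star_kron (A B : Matrix (Fin 2) (Fin 2) ℂ) :
    star (kron A B) = kron (star A) (star B) := by
  ext i j
  simp [kron, Matrix.conjTranspose_apply, mul_comm]

lemma ptranspose_trace (X : Matrix (Fin 4) (Fin 4) ℂ) :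
    (ptranspose X).trace = X.trace := by
  simp [Matrix.trace, ptranspose, Fin.sum_univ_four]

lemma trace_mul_ptranspose (X Y : Matrix (Fin 4) (Fin 4) ℂ) :
    (ptranspose X * ptranspose Y).trace = (X * Y).trace := by
  simp only [Matrix.trace, Matrix.diag, Matrix.mul_apply, ptranspose, Fin.sum_univ_four,
    q1_0, q1_1, q1_2, q1_3, q2_0, q2_1, q2_2, q2_3, pairIdx_00, pairIdx_01, pairIdx_10,
    pairIdx_11]
  ring

lemma ptranspose_kron_mul (A B C D : Matrix (Fin 2) (Fin 2) ℂ)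
    (X : Matrix (Fin 4) (Fin 4) ℂ) :
    ptranspose (kron A B * X * kron C D) =
      kron A Dᵀ * ptranspose X * kron C Bᵀ := by
  ext i j
  simp only [ptranspose, kron, Matrix.mul_apply, Fin.sum_univ_four, Matrix.transpose_apply,
    q1_0, q1_1, q1_2, q1_3, q2_0, q2_1, q2_2, q2_3, q1_pairIdx, q2_pairIdx, pairIdx_q,
    pairIdx_00, pairIdx_01, pairIdx_10, pairIdx_11]
  ring

lemma mul_vecMulVec' (M : Matrix (Fin 4) (Fin 4) ℂ) (x y : Fin 4 → ℂ) :
    M * vecMulVec x y = vecMulVec (M *ᵥ x) y := by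
  ext i j
  simp [Matrix.mul_apply, Matrix.vecMulVec_apply, Matrix.mulVec, dotProduct,
    Finset.sum_mul, mul_assoc]

lemma vecMulVec_mul' (x y : Fin 4 → ℂ) (N : Matrix (Fin 4) (Fin 4) ℂ) :
    vecMulVec x y * N = vecMulVec x (y ᵥ* N) := by
  ext i j
  simp [Matrix.mul_apply, Matrix.vecMulVec_apply, Matrix.vecMul, dotProduct,
    Finset.mul_sum, mul_assoc]

lemma trace_mul_vecMulVec (ρ : Matrix (Fin 4) (Fin 4) ℂ) (x : Fin 4 → ℂ) :
    (ρ * vecMulVec x (star x)).trace = star x ⬝ᵥ ρ *ᵥ x := by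
  simp only [Matrix.trace, Matrix.diag, Matrix.mul_apply, Matrix.vecMulVec_apply,
    dotProduct, Matrix.mulVec, Fin.sum_univ_four, Pi.star_apply]
  ring

def avec : Fin 4 → ℂ := ![0, 1 / Real.sqrt 2, -(1 / Real.sqrt 2 : ℝ), 0]

lemma sqrt2_mul : ((Real.sqrt 2 : ℂ))⁻¹ * ((Real.sqrt 2 : ℂ))⁻¹ = (2 : ℂ)⁻¹ := by
  have h2 : (Real.sqrt 2 : ℂ) * (Real.sqrt 2 : ℂ) = 2 := by
    norm_cast
    exact Real.mul_self_sqrt (by norm_num)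
  rw [← mul_inv, h2]

lemma ptranspose_bellP :
    ptranspose (vecMulVec bell (star bell)) =
      ((1 : ℂ) / 2) • 1 - vecMulVec avec (star avec) := by
  have h := sqrt2_mul
  ext i j
  fin_cases i <;> fin_cases j <;>
    simp [ptranspose, Matrix.vecMulVec_apply, bell, avec, Matrix.one_apply, pairIdx, q1, q2,
      Complex.star_def, map_div₀, Complex.conj_ofReal, h, Matrix.vecHead, Matrix.vecTail,
        -Matrix.cons_vecMulVec]

lemma rayleigh (H : Matrix (Fin 4) (Fin 4) ℂ) (hH : H.IsHermitian) (w : Fin 4 → ℂ)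
    (hw : star w ⬝ᵥ w = 1) :
    sInf {t : ℝ | (t : ℂ) ∈ spectrum ℂ H} ≤ (star w ⬝ᵥ H *ᵥ w).re := by
  have hset : {t : ℝ | (t : ℂ) ∈ spectrum ℂ H} = Set.range hH.eigenvalues := by
    ext t
    rw [Set.mem_setOf_eq, ← Complex.coe_algebraMap, spectrum.algebraMap_mem_iff,
      hH.spectrum_real_eq_range_eigenvalues]
  rw [hset]
  set μ := sInf (Set.range hH.eigenvalues) with hμ
  have hbdd : BddBelow (Set.range hH.eigenvalues) := (Set.finite_range _).bddBelow
  have hle : ∀ i, μ ≤ hH.eigenvalues i := fun i => csInf_le hbdd (Set.mem_range_self i)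
  set U : Matrix (Fin 4) (Fin 4) ℂ :=
    (Matrix.IsHermitian.eigenvectorUnitary hH : Matrix (Fin 4) (Fin 4) ℂ) with hUdef
  have hU1 : U * star U = 1 :=
    Unitary.mul_star_self_of_mem (Matrix.IsHermitian.eigenvectorUnitary hH).2
  set z : Fin 4 → ℂ := star U *ᵥ w with hzdef
  have hzstar : star z = star w ᵥ* U := by
    rw [hzdef, star_mulVec, Matrix.star_eq_conjTranspose, conjTranspose_conjTranspose]
  have key : star w ⬝ᵥ H *ᵥ w =
      star z ⬝ᵥ (diagonal (RCLike.ofReal ∘ hH.eigenvalues)) *ᵥ z := by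
    conv_lhs => rw [hH.spectral_theorem]
    rw [Unitary.conjStarAlgAut_apply, ← hUdef, ← Matrix.mulVec_mulVec, ← Matrix.mulVec_mulVec, Matrix.dotProduct_mulVec,
      hzstar]
  have hz1 : star z ⬝ᵥ z = 1 := by
    rw [hzstar, hzdef, Matrix.dotProduct_mulVec, Matrix.vecMul_vecMul, hU1,
      Matrix.vecMul_one, hw]
  have hsum : (star z ⬝ᵥ (diagonal (RCLike.ofReal ∘ hH.eigenvalues)) *ᵥ z).re =
      ∑ i, hH.eigenvalues i * Complex.normSq (z i) := by
    simp only [dotProduct, Matrix.mulVec_diagonal, Pi.star_apply, Function.comp_apply]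
    have hcoe : ∀ r : ℝ, (RCLike.ofReal r : ℂ) = (r : ℂ) := fun r => rfl
    simp only [hcoe]
    rw [Complex.re_sum]
    congr 1
    ext i
    have : star (z i) * (((hH.eigenvalues i : ℝ) : ℂ) * z i)
        = ((hH.eigenvalues i : ℝ) : ℂ) * (z i * star (z i)) := by ring
    rw [this, Complex.star_def, Complex.mul_conj, ← Complex.ofReal_mul, Complex.ofReal_re]
  have hnsum : ∑ i, Complex.normSq (z i) = 1 := by
    have h : (star z ⬝ᵥ z).re = ∑ i, Complex.normSq (z i) := by
      simp only [dotProduct, Pi.star_apply]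
      rw [Complex.re_sum]
      congr 1
      ext i
      rw [mul_comm, Complex.star_def, Complex.mul_conj, Complex.ofReal_re]
    rw [← h, hz1]
    simp
  rw [key, hsum]
  calc μ = μ * ∑ i, Complex.normSq (z i) := by rw [hnsum, mul_one]
    _ = ∑ i, μ * Complex.normSq (z i) := by rw [Finset.mul_sum]
    _ ≤ ∑ i, hH.eigenvalues i * Complex.normSq (z i) := by
        apply Finset.sum_le_sum
        intro i _
        exact mul_le_mul_of_nonneg_right (hle i) (Complex.normSq_nonneg _)

/-- F(ρ) ≤ (1 + N(ρ))/2 for every two-qubit density matrix ρ. -/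
theorem fidelity_le_half_one_add_negativity
    (ρ : Matrix (Fin 4) (Fin 4) ℂ) (hpsd : ρ.PosSemidef) (htr : ρ.trace = 1) :
    fid ρ ≤ (1 + negativity ρ) / 2 := by
  have hN : (0:ℝ) ≤ negativity ρ := le_max_left _ _
  apply Real.sSup_le _ (by linarith)
  rintro x ⟨ψ, ⟨U, V, hU, hV, -, -, hψ⟩, rfl⟩
  -- notation
  set Vc : Matrix (Fin 2) (Fin 2) ℂ := (star V)ᵀ with hVcdef
  have hVcT : star Vc = Vᵀ := by
    ext i j
    simp [hVcdef, Matrix.conjTranspose_apply, Matrix.transpose_apply]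
  set M : Matrix (Fin 4) (Fin 4) ℂ := kron U Vc with hMdef
  set w : Fin 4 → ℂ := M *ᵥ avec with hwdef
  have hUu : U * star U = 1 := (Matrix.mem_unitaryGroup_iff).mp hU
  have hVu : V * star V = 1 := (Matrix.mem_unitaryGroup_iff).mp hV
  have hVu' : star V * V = 1 := (Matrix.mem_unitaryGroup_iff').mp hV
  have hVcu : Vc * star Vc = 1 := by
    rw [hVcdef, hVcT, ← Matrix.transpose_mul, hVu, Matrix.transpose_one]
  have hVcu' : star Vc * Vc = 1 := by
    rw [hVcdef, hVcT, ← Matrix.transpose_mul, hVu', Matrix.transpose_one]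
  have hsM : star M = kron (star U) Vᵀ := by rw [hMdef, star_kron, hVcT]
  have hMu : M * star M = 1 := by
    rw [hMdef, star_kron, kron_mul, hUu, hVcu, kron_one]
  have hMu' : star M * M = 1 := by
    rw [hMdef, star_kron, kron_mul, (Matrix.mem_unitaryGroup_iff').mp hU, hVcu', kron_one]
  -- norm of w
  have hwnorm : star w ⬝ᵥ w = 1 := by
    rw [hwdef, star_mulVec, Matrix.dotProduct_mulVec, Matrix.vecMul_vecMul,
      ← Matrix.star_eq_conjTranspose, hMu', Matrix.vecMul_one]
    have h := sqrt2_mul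
    simp [avec, dotProduct, Fin.sum_univ_four, Complex.star_def, map_div₀,
      Complex.conj_ofReal, h, Matrix.vecHead, Matrix.vecTail]
    norm_num
  -- hermiticity of the partial transpose
  have hPh : (ptranspose ρ).IsHermitian := by
    have hρh := hpsd.1
    ext i j
    rw [Matrix.conjTranspose_apply]
    show star (ρ (pairIdx (q1 j) (q2 i)) (pairIdx (q1 i) (q2 j))) = _
    exact hρh.apply _ _
  -- the partial transpose of the projector onto ψ
  have hP : ptranspose (vecMulVec ψ (star ψ)) =
      ((1 : ℂ) / 2) • 1 - vecMulVec w (star w) := by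
    have hstarkron : (kron U V)ᴴ = kron (star U) (star V) := by
      rw [← Matrix.star_eq_conjTranspose, star_kron]
    rw [hψ, star_mulVec, ← mul_vecMulVec', ← vecMulVec_mul', hstarkron, ← mul_assoc,
      ptranspose_kron_mul, ptranspose_bellP]
    have h1 : kron U (star V)ᵀ = M := rfl
    rw [h1, ← hsM]
    rw [mul_sub, sub_mul, mul_smul_comm, mul_one, smul_mul_assoc, hMu]
    congr 1
    rw [mul_vecMulVec', vecMulVec_mul', ← hwdef]
    rw [hwdef, star_mulVec, Matrix.star_eq_conjTranspose]
  -- the overlap as a function of the partial transpose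
  have hover : star ψ ⬝ᵥ ρ *ᵥ ψ = 1 / 2 - star w ⬝ᵥ ptranspose ρ *ᵥ w := by
    rw [← trace_mul_vecMulVec, ← trace_mul_ptranspose, hP, mul_sub, Matrix.trace_sub,
      mul_smul_comm, mul_one, Matrix.trace_smul, ptranspose_trace, htr,
      trace_mul_vecMulVec, smul_eq_mul, mul_one]
  have hray := rayleigh (ptranspose ρ) hPh w hwnorm
  have hover' : overlap ρ ψ = 1 / 2 - (star w ⬝ᵥ ptranspose ρ *ᵥ w).re := by
    rw [overlap, hover, Complex.sub_re]
    norm_num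
  rw [hover', negativity]
  have h2 : -2 * sInf {t : ℝ | (t : ℂ) ∈ spectrum ℂ (ptranspose ρ)} ≤
      max 0 (-2 * sInf {t : ℝ | (t : ℂ) ∈ spectrum ℂ (ptranspose ρ)}) := le_max_right _ _
  linarith
end
end

section
/- Every full-rank (rank 4) two-qubit density matrix ρ can be written as a convex combination ρ = p·ρ₁ + (1−p)·ρ₂ with 0 < p < 1, where ρ₁, ρ₂ are density matrices of rank at most 3 having the same correlation matrix: Tr(ρ₁ σ_i⊗σ_j) = Tr(ρ₂ σ_i⊗σ_j) = Tr(ρ σ_i⊗σ_j) for all i,j ∈ {1,2,3} (Pauli matrices). -/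
open Matrix Complex
open scoped ComplexOrder

noncomputable section

-- ===== auxiliary machinery =====

def Dm : Matrix (Fin 4) (Fin 4) ℂ := Matrix.diagonal ![1, 1, -1, -1]

lemma star_vec : star (![1,1,-1,-1] : Fin 4 → ℂ) = ![1,1,-1,-1] := by
  funext i; fin_cases i <;> simp

lemma Dm_herm : Dm.IsHermitian := by
  unfold Matrix.IsHermitian Dm
  rw [Matrix.diagonal_conjTranspose, star_vec]

lemma Dm_trace : Dm.trace = 0 := by
  simp [Dm, Matrix.trace_diagonal, Fin.sum_univ_four]

lemma Dm_quad (x : Fin 4 → ℂ) : (star x ⬝ᵥ Dm *ᵥ x).re =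
    normSq (x 0) + normSq (x 1) - normSq (x 2) - normSq (x 3) := by
  simp [Dm, dotProduct, Fin.sum_univ_four, Matrix.mulVec_diagonal, Complex.normSq_apply,
    Complex.mul_re, Complex.add_re]
  ring

lemma norm_quad (x : Fin 4 → ℂ) : (star x ⬝ᵥ x).re =
    normSq (x 0) + normSq (x 1) + normSq (x 2) + normSq (x 3) := by
  simp [dotProduct, Fin.sum_univ_four, Complex.normSq_apply, Complex.mul_re]

lemma Dm_bound (x : Fin 4 → ℂ) : |(star x ⬝ᵥ Dm *ᵥ x).re| ≤ (star x ⬝ᵥ x).re := by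
  rw [Dm_quad, norm_quad, abs_le]
  constructor <;>
    nlinarith [Complex.normSq_nonneg (x 0), Complex.normSq_nonneg (x 1),
      Complex.normSq_nonneg (x 2), Complex.normSq_nonneg (x 3)]

lemma Dm_neg_wit : (star (![0,0,1,0] : Fin 4 → ℂ) ⬝ᵥ Dm *ᵥ ![0,0,1,0]).re < 0 := by
  rw [Dm_quad]; norm_num
  norm_num [show (![0,0,1,0] : Fin 4 → ℂ) 2 = 1 from rfl, show (![0,0,1,0] : Fin 4 → ℂ) 3 = 0 from rfl]

lemma Dm_pos_wit : (star (![1,0,0,0] : Fin 4 → ℂ) ⬝ᵥ (-Dm) *ᵥ ![1,0,0,0]).re < 0 := by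
  have h : (star (![1,0,0,0] : Fin 4 → ℂ) ⬝ᵥ (-Dm) *ᵥ ![1,0,0,0]) =
      -(star (![1,0,0,0] : Fin 4 → ℂ) ⬝ᵥ Dm *ᵥ ![1,0,0,0]) := by
    rw [Matrix.neg_mulVec, dotProduct_neg]
  rw [h, Complex.neg_re, Dm_quad]
  norm_num
  norm_num [show (![1,0,0,0] : Fin 4 → ℂ) 2 = 0 from rfl, show (![1,0,0,0] : Fin 4 → ℂ) 3 = 0 from rfl]

lemma Dm_ortho (i j : Fin 3) : (Dm * kron (pauli i) (pauli j)).trace = 0 := by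
  fin_cases i <;> fin_cases j <;>
    simp [Dm, Matrix.trace, Matrix.diag, Matrix.mul_apply, Matrix.diagonal,
      Fin.sum_univ_four, kron, pauli, pauli1, pauli2, pauli3]

lemma quad_real {M : Matrix (Fin 4) (Fin 4) ℂ} (hM : M.IsHermitian) (x : Fin 4 → ℂ) :
    (((star x ⬝ᵥ M *ᵥ x).re : ℂ)) = star x ⬝ᵥ M *ᵥ x := by
  rw [← Complex.conj_eq_iff_re]
  calc (starRingEnd ℂ) (star x ⬝ᵥ M *ᵥ x)
      = star (star x ⬝ᵥ M *ᵥ x) := rfl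
    _ = star (M *ᵥ x) ⬝ᵥ x := by rw [← star_dotProduct_star, star_star]
    _ = (star x ᵥ* Mᴴ) ⬝ᵥ x := by rw [star_mulVec]
    _ = star x ⬝ᵥ Mᴴ *ᵥ x := by rw [dotProduct_mulVec]
    _ = star x ⬝ᵥ M *ᵥ x := by rw [hM.eq]

lemma nonneg_of_re {M : Matrix (Fin 4) (Fin 4) ℂ} (hM : M.IsHermitian) (x : Fin 4 → ℂ)
    (h : 0 ≤ (star x ⬝ᵥ M *ᵥ x).re) : 0 ≤ star x ⬝ᵥ M *ᵥ x := by
  rw [← quad_real hM x]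
  exact_mod_cast h

lemma sub_smul_psd {M : Matrix (Fin 4) (Fin 4) ℂ} (hM : M.IsHermitian) {c : ℝ}
    (hc : ∀ i, c ≤ hM.eigenvalues i) : (M - (c : ℂ) • 1).PosSemidef := by
  set U : Matrix (Fin 4) (Fin 4) ℂ := (hM.eigenvectorUnitary : Matrix (Fin 4) (Fin 4) ℂ) with hUdef
  have hU : U * star U = 1 := Matrix.mem_unitaryGroup_iff.mp hM.eigenvectorUnitary.2
  have key : M - (c : ℂ) • 1 =
      U * Matrix.diagonal (fun i => ((hM.eigenvalues i - c : ℝ) : ℂ)) * Uᴴ := by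
    rw [← Matrix.star_eq_conjTranspose U]
    conv_lhs => rw [hM.spectral_theorem, ← hU]
    have h2 : (c:ℂ) • (U * star U) = U * ((c:ℂ) • (1 : Matrix (Fin 4) (Fin 4) ℂ)) * star U := by
      rw [mul_smul_comm, smul_mul_assoc, mul_one]
    simp only [Unitary.conjStarAlgAut_apply, Unitary.coe_star]
    rw [← hUdef]
    rw [h2, ← Matrix.sub_mul, ← Matrix.mul_sub]
    congr 2
    ext i j
    by_cases h : i = j <;>
      simp [Matrix.diagonal, Matrix.one_apply, h, Matrix.sub_apply, Complex.ofReal_sub]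
  rw [key]
  exact (Matrix.posSemidef_diagonal_iff.mpr fun i => by
    have := hc i
    rw [Complex.zero_le_real]
    linarith).mul_mul_conjTranspose_same _

lemma hermAdd {M D : Matrix (Fin 4) (Fin 4) ℂ} (hM : M.IsHermitian) (hD : D.IsHermitian)
    (t : ℝ) : (M + (t : ℂ) • D).IsHermitian := by
  apply hM.add
  unfold Matrix.IsHermitian
  rw [Matrix.conjTranspose_smul, hD.eq, Complex.star_def, Complex.conj_ofReal]

lemma quad_lin (M D : Matrix (Fin 4) (Fin 4) ℂ) (t : ℝ) (x : Fin 4 → ℂ) :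
    (star x ⬝ᵥ (M + (t : ℂ) • D) *ᵥ x).re
      = (star x ⬝ᵥ M *ᵥ x).re + t * (star x ⬝ᵥ D *ᵥ x).re := by
  rw [Matrix.add_mulVec, Matrix.smul_mulVec, dotProduct_add, dotProduct_smul,
    Complex.add_re, smul_eq_mul, Complex.re_ofReal_mul]

lemma margin {M D : Matrix (Fin 4) (Fin 4) ℂ} (hM : M.IsHermitian) (hD : D.IsHermitian)
    (hb : ∀ x : Fin 4 → ℂ, |(star x ⬝ᵥ D *ᵥ x).re| ≤ (star x ⬝ᵥ x).re)
    {c t : ℝ} (hc : ∀ i, c ≤ hM.eigenvalues i) (ht : |t| ≤ c) :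
    (M + (t : ℂ) • D).PosSemidef := by
  refine posSemidef_iff_dotProduct_mulVec.mpr ⟨hermAdd hM hD t, fun x => nonneg_of_re (hermAdd hM hD t) x ?_⟩
  rw [quad_lin]
  have h1 : 0 ≤ (star x ⬝ᵥ (M - (c : ℂ) • 1) *ᵥ x).re :=
    (Complex.le_def.mp ((sub_smul_psd hM hc).dotProduct_mulVec_nonneg x)).1
  have h2 : (star x ⬝ᵥ (M - (c : ℂ) • 1) *ᵥ x).re
      = (star x ⬝ᵥ M *ᵥ x).re - c * (star x ⬝ᵥ x).re := by
    rw [Matrix.sub_mulVec, Matrix.smul_mulVec, dotProduct_sub, dotProduct_smul,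
      Complex.sub_re, smul_eq_mul, Complex.re_ofReal_mul, Matrix.one_mulVec]
  rw [h2] at h1
  have h3 := hb x
  have h4 := abs_le.mp h3
  have h5 := abs_le.mp ht
  have hn : 0 ≤ (star x ⬝ᵥ x).re := le_trans (abs_nonneg _) h3
  nlinarith [mul_nonneg (by linarith : (0:ℝ) ≤ c + t)
      (by linarith : (0:ℝ) ≤ (star x ⬝ᵥ x).re + (star x ⬝ᵥ D *ᵥ x).re),
    mul_nonneg (by linarith : (0:ℝ) ≤ c - t)
      (by linarith : (0:ℝ) ≤ (star x ⬝ᵥ x).re - (star x ⬝ᵥ D *ᵥ x).re)]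

lemma rank_le_three {M : Matrix (Fin 4) (Fin 4) ℂ} (hM : M.IsHermitian) (i0 : Fin 4)
    (h : hM.eigenvalues i0 = 0) : M.rank ≤ 3 := by
  rw [hM.rank_eq_card_non_zero_eigs]
  have h2 : Fintype.card {i // hM.eigenvalues i ≠ 0} < Fintype.card (Fin 4) :=
    Fintype.card_subtype_lt (x := i0) (by simp [h])
  simp only [Fintype.card_fin] at h2
  omega

lemma boundary (ρ : Matrix (Fin 4) (Fin 4) ℂ) (hpd : ρ.PosDef)
    (D : Matrix (Fin 4) (Fin 4) ℂ) (hD : D.IsHermitian)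
    (hb : ∀ x : Fin 4 → ℂ, |(star x ⬝ᵥ D *ᵥ x).re| ≤ (star x ⬝ᵥ x).re)
    (v : Fin 4 → ℂ) (hv : (star v ⬝ᵥ D *ᵥ v).re < 0) :
    ∃ b : ℝ, 0 < b ∧ (ρ + (b : ℂ) • D).PosSemidef ∧ (ρ + (b : ℂ) • D).rank ≤ 3 := by
  classical
  set S : Set ℝ := {t : ℝ | 0 ≤ t ∧ (ρ + (t : ℂ) • D).PosSemidef} with hS
  set c0 : ℝ := Finset.univ.inf' Finset.univ_nonempty hpd.1.eigenvalues with hc0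
  have hc0pos : 0 < c0 := by
    rw [hc0, Finset.lt_inf'_iff]
    exact fun i _ => hpd.eigenvalues_pos i
  have hc0le : ∀ i, c0 ≤ hpd.1.eigenvalues i := fun i => Finset.inf'_le _ (Finset.mem_univ i)
  have hmem : c0 ∈ S := ⟨hc0pos.le, margin hpd.1 hD hb hc0le (by rw [abs_of_pos hc0pos])⟩
  have hSne : S.Nonempty := ⟨c0, hmem⟩
  have hsv : 0 < -(star v ⬝ᵥ D *ᵥ v).re := by linarith
  have hub : ∀ t ∈ S, t ≤ (star v ⬝ᵥ ρ *ᵥ v).re / (-(star v ⬝ᵥ D *ᵥ v).re) := by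
    intro t ht
    have h1 : 0 ≤ (star v ⬝ᵥ (ρ + (t : ℂ) • D) *ᵥ v).re := (Complex.le_def.mp (ht.2.dotProduct_mulVec_nonneg v)).1
    rw [quad_lin] at h1
    rw [le_div_iff₀ hsv]
    nlinarith
  have hbdd : BddAbove S := ⟨_, fun t ht => hub t ht⟩
  set b : ℝ := sSup S with hbdef
  have hble : c0 ≤ b := le_csSup hbdd hmem
  have hb0 : 0 < b := lt_of_lt_of_le hc0pos hble
  have hr0 : ∀ x : Fin 4 → ℂ, 0 ≤ (star x ⬝ᵥ ρ *ᵥ x).re :=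
    fun x => (Complex.le_def.mp (hpd.posSemidef.dotProduct_mulVec_nonneg x)).1
  have hPSDb : (ρ + (b : ℂ) • D).PosSemidef := by
    refine posSemidef_iff_dotProduct_mulVec.mpr ⟨hermAdd hpd.1 hD b, fun x => nonneg_of_re (hermAdd hpd.1 hD b) x ?_⟩
    rw [quad_lin]
    by_cases hs : 0 ≤ (star x ⬝ᵥ D *ᵥ x).re
    · exact add_nonneg (hr0 x) (mul_nonneg hb0.le hs)
    · push_neg at hs
      have hsx : 0 < -(star x ⬝ᵥ D *ᵥ x).re := by linarith
      have hub2 : b ≤ (star x ⬝ᵥ ρ *ᵥ x).re / (-(star x ⬝ᵥ D *ᵥ x).re) := by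
        apply csSup_le hSne
        intro t ht
        have h1 : 0 ≤ (star x ⬝ᵥ (ρ + (t : ℂ) • D) *ᵥ x).re := (Complex.le_def.mp (ht.2.dotProduct_mulVec_nonneg x)).1
        rw [quad_lin] at h1
        rw [le_div_iff₀ hsx]
        nlinarith
      rw [le_div_iff₀ hsx] at hub2
      nlinarith
  have hHermb : (ρ + (b : ℂ) • D).IsHermitian := hPSDb.1
  have hex : ∃ i, hHermb.eigenvalues i = 0 := by
    by_contra h
    push_neg at h
    have pos : ∀ i, 0 < hHermb.eigenvalues i := fun i =>
      lt_of_le_of_ne (hPSDb.eigenvalues_nonneg i) (Ne.symm (h i))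
    set c : ℝ := Finset.univ.inf' Finset.univ_nonempty hHermb.eigenvalues with hcdef
    have hcpos : 0 < c := by
      rw [hcdef, Finset.lt_inf'_iff]; exact fun i _ => pos i
    have hcle : ∀ i, c ≤ hHermb.eigenvalues i := fun i => Finset.inf'_le _ (Finset.mem_univ i)
    have hpsd2 : (ρ + ((b + c : ℝ) : ℂ) • D).PosSemidef := by
      have h2 := margin hHermb hD hb hcle (t := c) (by rw [abs_of_pos hcpos])
      have h3 : ρ + (b : ℂ) • D + (c : ℂ) • D = ρ + ((b + c : ℝ) : ℂ) • D := by
        push_cast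
        rw [add_smul]
        abel
      rwa [h3] at h2
    have hmem2 : b + c ∈ S := ⟨by linarith, hpsd2⟩
    have := le_csSup hbdd hmem2
    linarith
  obtain ⟨i0, hi0⟩ := hex
  exact ⟨b, hb0, hPSDb, rank_le_three hHermb i0 hi0⟩

-- ===== end auxiliary machinery =====

/-- Every full-rank two-qubit density matrix is a convex combination of two density
matrices of rank at most 3 having the same correlation matrix Tr(ρ σ_i⊗σ_j). -/
theorem full_rank_decomposition
    (ρ : Matrix (Fin 4) (Fin 4) ℂ) (hpd : ρ.PosDef) (htr : ρ.trace = 1) :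
    ∃ (p : ℝ) (ρ1 ρ2 : Matrix (Fin 4) (Fin 4) ℂ),
      0 < p ∧ p < 1 ∧
      ρ1.PosSemidef ∧ ρ1.trace = 1 ∧ ρ1.rank ≤ 3 ∧
      ρ2.PosSemidef ∧ ρ2.trace = 1 ∧ ρ2.rank ≤ 3 ∧
      ρ = (p : ℂ) • ρ1 + ((1 : ℂ) - p) • ρ2 ∧
      (∀ i j : Fin 3, (ρ1 * kron (pauli i) (pauli j)).trace = (ρ * kron (pauli i) (pauli j)).trace) ∧
      (∀ i j : Fin 3, (ρ2 * kron (pauli i) (pauli j)).trace = (ρ * kron (pauli i) (pauli j)).trace) := by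
  obtain ⟨b, hb0, hbPSD, hbrank⟩ := boundary ρ hpd Dm Dm_herm Dm_bound _ Dm_neg_wit
  have hDneg_herm : (-Dm).IsHermitian := Dm_herm.neg
  have hDneg_bound : ∀ x : Fin 4 → ℂ, |(star x ⬝ᵥ (-Dm) *ᵥ x).re| ≤ (star x ⬝ᵥ x).re := by
    intro x
    rw [Matrix.neg_mulVec, dotProduct_neg, Complex.neg_re, abs_neg]
    exact Dm_bound x
  obtain ⟨a, ha0, haPSD, harank⟩ := boundary ρ hpd (-Dm) hDneg_herm hDneg_bound _ Dm_pos_wit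
  have habpos : 0 < a + b := by linarith
  have hab : (a : ℂ) + (b : ℂ) ≠ 0 := by
    exact_mod_cast (show ((a + b : ℝ) : ℂ) ≠ 0 by exact_mod_cast habpos.ne')
  refine ⟨a / (a + b), ρ + (b:ℂ) • Dm, ρ + (a:ℂ) • (-Dm), div_pos ha0 habpos,
    (div_lt_one habpos).mpr (by linarith), hbPSD, ?_, hbrank, haPSD, ?_, harank, ?_, ?_, ?_⟩
  · rw [Matrix.trace_add, Matrix.trace_smul, Dm_trace, smul_zero, add_zero, htr]
  · rw [Matrix.trace_add, Matrix.trace_smul, Matrix.trace_neg, Dm_trace, neg_zero, smul_zero,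
      add_zero, htr]
  · match_scalars
    · push_cast
      field_simp
      ring
    · push_cast
      field_simp
      ring
  · intro i j
    rw [Matrix.add_mul, Matrix.smul_mul, Matrix.trace_add, Matrix.trace_smul, Dm_ortho,
      smul_zero, add_zero]
  · intro i j
    rw [Matrix.add_mul, Matrix.smul_mul, Matrix.neg_mul, Matrix.trace_add, Matrix.trace_smul,
      Matrix.trace_neg, Dm_ortho, neg_zero, smul_zero, add_zero]
end
end

section
/- For the state ρ = (1−C)|00⟩⟨00| + C|ψ⁻⟩⟨ψ⁻| with |ψ⁻⟩ = (|01⟩−|10⟩)/√2 and C ∈ [0,1], the negativity equals N(ρ) = √((1−C)² + C²) − (1−C). -/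
open Matrix Complex
open scoped ComplexOrder

noncomputable section

lemma det_aux (a b c d e f : ℂ) :
    (!![a, 0, 0, b; 0, c, 0, 0; 0, 0, d, 0; e, 0, 0, f] : Matrix (Fin 4) (Fin 4) ℂ).det
    = c * d * (a * f - b * e) := by
  simp [Matrix.det_succ_row_zero, Fin.sum_univ_succ, Matrix.det_fin_three,
    show (Fin.castSucc 2 : Fin 4) = 2 from rfl,
    show (Fin.succAbove (3 : Fin 4) (2 : Fin 3) : Fin 4) = 2 from rfl]
  ring

/-- For ρ = (1-C)|00⟩⟨00| + C|ψ⁻⟩⟨ψ⁻| with C ∈ [0,1], the negativity equals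
√((1-C)² + C²) - (1-C). -/
theorem negativity_of_mixture
    (C : ℝ) (hC0 : 0 ≤ C) (hC : C ≤ 1) :
    negativity (!![((1-C : ℝ)), 0, 0, 0;
                   0, (C/2 : ℝ), (-C/2 : ℝ), 0;
                   0, (-C/2 : ℝ), (C/2 : ℝ), 0;
                   0, 0, 0, 0]) =
      Real.sqrt ((1-C)^2 + C^2) - (1-C) := by
  set a : ℝ := 1 - C with ha
  set s : ℝ := Real.sqrt ((1-C)^2 + C^2) with hs
  have hs0 : 0 ≤ s := Real.sqrt_nonneg _
  have hs2 : s ^ 2 = a ^ 2 + C ^ 2 := by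
    rw [hs, Real.sq_sqrt (by positivity)]
  have hsa : a ≤ s := by
    calc a ≤ |a| := le_abs_self a
    _ = Real.sqrt (a ^ 2) := (Real.sqrt_sq_eq_abs a).symm
    _ ≤ s := Real.sqrt_le_sqrt (by nlinarith)
  -- the partial transpose
  have hpt : ptranspose (!![((1-C : ℝ)), 0, 0, 0;
                   0, (C/2 : ℝ), (-C/2 : ℝ), 0;
                   0, (-C/2 : ℝ), (C/2 : ℝ), 0;
                   0, 0, 0, 0]) =
      !![((1-C : ℝ) : ℂ), 0, 0, ((-C/2 : ℝ) : ℂ);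
         0, ((C/2 : ℝ) : ℂ), 0, 0;
         0, 0, ((C/2 : ℝ) : ℂ), 0;
         ((-C/2 : ℝ) : ℂ), 0, 0, 0] := by
    funext i j
    fin_cases i <;> fin_cases j <;> simp [ptranspose, pairIdx, q1, q2] <;> rfl
  -- the spectrum as a set of reals
  have hset : {t : ℝ | (t : ℂ) ∈ spectrum ℂ (ptranspose (!![((1-C : ℝ)), 0, 0, 0;
                   0, (C/2 : ℝ), (-C/2 : ℝ), 0;
                   0, (-C/2 : ℝ), (C/2 : ℝ), 0;
                   0, 0, 0, 0]))} = {C/2, (a+s)/2, (a-s)/2} := by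
    ext t
    rw [Set.mem_setOf_eq, hpt, spectrum.mem_iff, Matrix.isUnit_iff_isUnit_det,
      isUnit_iff_ne_zero, not_not, Algebra.algebraMap_eq_smul_one]
    have hmat : (t : ℂ) • (1 : Matrix (Fin 4) (Fin 4) ℂ) -
        !![((1-C : ℝ) : ℂ), 0, 0, ((-C/2 : ℝ) : ℂ);
           0, ((C/2 : ℝ) : ℂ), 0, 0;
           0, 0, ((C/2 : ℝ) : ℂ), 0;
           ((-C/2 : ℝ) : ℂ), 0, 0, 0] =
        !![((t-(1-C) : ℝ) : ℂ), 0, 0, ((C/2 : ℝ) : ℂ);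
           0, ((t-C/2 : ℝ) : ℂ), 0, 0;
           0, 0, ((t-C/2 : ℝ) : ℂ), 0;
           ((C/2 : ℝ) : ℂ), 0, 0, ((t : ℝ) : ℂ)] := by
      funext i j
      fin_cases i <;> fin_cases j <;>
        simp [Matrix.smul_apply, Matrix.one_apply, Matrix.vecHead, Matrix.vecTail] <;> push_cast <;> ring
    rw [hmat, det_aux]
    have key : ((t-C/2 : ℝ) : ℂ) * ((t-C/2 : ℝ) : ℂ) *
        (((t-(1-C) : ℝ) : ℂ) * ((t : ℝ) : ℂ) - ((C/2 : ℝ) : ℂ) * ((C/2 : ℝ) : ℂ))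
        = (((t-C/2) * (t-C/2) * ((t-(1-C))*t - (C/2)*(C/2)) : ℝ) : ℂ) := by
      push_cast; ring
    rw [key]
    rw [show ((((t-C/2) * (t-C/2) * ((t-(1-C))*t - (C/2)*(C/2)) : ℝ) : ℂ) = 0)
        ↔ ((t-C/2) * (t-C/2) * ((t-(1-C))*t - (C/2)*(C/2)) : ℝ) = 0 from by
      exact_mod_cast Complex.ofReal_eq_zero]
    have hquad : (t-(1-C))*t - (C/2)*(C/2) = (t - (a+s)/2) * (t - (a-s)/2) := by
      have : (t - (a+s)/2) * (t - (a-s)/2) = t^2 - a*t + (a^2 - s^2)/4 := by ring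
      rw [this, hs2, ha]; ring
    rw [hquad]
    simp only [Set.mem_insert_iff, Set.mem_singleton_iff, mul_eq_zero]
    constructor
    · rintro ((h | h) | h | h) <;> [left; left; right; right] <;> first
      | (left; linarith) | (right; linarith) | linarith
    · rintro (h | h | h)
      · left; left; linarith
      · right; left; linarith
      · right; right; linarith
  -- infimum of the three eigenvalues
  have hinf : sInf ({C/2, (a+s)/2, (a-s)/2} : Set ℝ) = (a-s)/2 := by
    rw [show ({C/2, (a+s)/2, (a-s)/2} : Set ℝ) = insert (C/2) {(a+s)/2, (a-s)/2} from rfl,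
      csInf_insert (Set.Finite.bddBelow (by simp)) (by simp), csInf_pair]
    have h1 : (a-s)/2 ≤ (a+s)/2 := by linarith
    have h2 : (a-s)/2 ≤ C/2 := by
      have : a - C ≤ s := by
        calc a - C ≤ a := by linarith
        _ ≤ s := hsa
      linarith
    rw [inf_eq_right.mpr h1, inf_eq_right.mpr h2]
  rw [negativity, hset, hinf]
  rw [max_eq_right (by linarith)]
  ring

end
end
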